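/- arXiv:math/0609045 — 7 statements merged into one kernel-verified Lean document; each statement's English description precedes it below -/
import Mathlib

section
/- Let ι be a nonempty finite index set, let x : ι → ℝ with x i > 0 for all i, and let b : ι → ℝ with b i ≥ 0 for all i. Then ⊕_i (x i + b i) ≤ (⊕_i x i) + ∑_i b i, where ⊕ denotes the harmonic sum. -/
open Finset

/-- The harmonic sum of `x i + b i` is at most the harmonic sum of the `x i`
plus the ordinary sum of the `b i`. -/
theorem harmonicSum_add_le (ι : Type*) [Fintype ι] [Nonempty ι]
    (x b : ι → ℝ) (hx : ∀ i, 0 < x i) (hb : ∀ i, 0 ≤ b i) :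
    (∑ i, (x i + b i)⁻¹)⁻¹ ≤ (∑ i, (x i)⁻¹)⁻¹ + ∑ i, b i := by
  set S := ∑ i, b i with hSdef
  have hS0 : 0 ≤ S := Finset.sum_nonneg fun i _ => hb i
  have hsum : 0 < ∑ i, (x i)⁻¹ :=
    Finset.sum_pos (fun i _ => inv_pos.mpr (hx i)) univ_nonempty
  set H := (∑ i, (x i)⁻¹)⁻¹ with hHdef
  have hH0 : 0 < H := inv_pos.mpr hsum
  have hHle : ∀ i, H ≤ x i := by
    intro i
    have h1 : (x i)⁻¹ ≤ ∑ j, (x j)⁻¹ :=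
      Finset.single_le_sum (fun j _ => (inv_pos.mpr (hx j)).le) (mem_univ i)
    calc H ≤ ((x i)⁻¹)⁻¹ := by
            apply inv_anti₀ (inv_pos.mpr (hx i)) h1
      _ = x i := inv_inv _
  have key : ∀ i, H / (H + S) * (x i)⁻¹ ≤ (x i + b i)⁻¹ := by
    intro i
    have h1 : 0 < x i := hx i
    have hbi : b i ≤ S := Finset.single_le_sum (fun j _ => hb j) (mem_univ i)
    have step1 : (x i + S)⁻¹ ≤ (x i + b i)⁻¹ := by
      apply inv_anti₀ (by linarith [hb i]) (by linarith)
    refine le_trans ?_ step1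
    have heq : H / (H + S) * (x i)⁻¹ = H / ((H + S) * x i) := by
      field_simp
    rw [heq, inv_eq_one_div, div_le_div_iff₀ (by positivity) (by positivity)]
    nlinarith [hHle i]
  have hsum2 : (H + S)⁻¹ ≤ ∑ i, (x i + b i)⁻¹ := by
    calc (H + S)⁻¹ = H / (H + S) * (∑ i, (x i)⁻¹) := by
          have hHinv : H⁻¹ = ∑ i, (x i)⁻¹ := by rw [hHdef, inv_inv]
          rw [← hHinv]
          field_simp
      _ = ∑ i, H / (H + S) * (x i)⁻¹ := by rw [Finset.mul_sum]
      _ ≤ ∑ i, (x i + b i)⁻¹ := Finset.sum_le_sum fun i _ => key i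
  have hpos : 0 < (H + S)⁻¹ := inv_pos.mpr (by linarith)
  calc (∑ i, (x i + b i)⁻¹)⁻¹ ≤ ((H + S)⁻¹)⁻¹ :=
        inv_anti₀ hpos hsum2
    _ = H + S := inv_inv _
end

section
/- Let ι be a nonempty finite index set, let x : ι → ℝ with x i > 0 for all i, let b : ι → ℝ with b i ≥ 0 for all i, and let y be a real number. If ⊕_i (x i + b i) ≥ y, then ⊕_i x i ≥ y − ∑_i b i, where ⊕ denotes the harmonic sum. -/
open Finset

/-- If the harmonic sum of `x i + b i` is at least `y`, then the harmonic sum of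
the `x i` is at least `y` minus the ordinary sum of the `b i`. -/
theorem harmonicSum_ge_sub_of_harmonicSum_add_ge (ι : Type*) [Fintype ι] [Nonempty ι]
    (x b : ι → ℝ) (y : ℝ) (hx : ∀ i, 0 < x i) (hb : ∀ i, 0 ≤ b i)
    (h : y ≤ (∑ i, (x i + b i)⁻¹)⁻¹) :
    y - ∑ i, b i ≤ (∑ i, (x i)⁻¹)⁻¹ := by
  set S := ∑ i, (x i)⁻¹ with hS
  set T := ∑ i, (x i + b i)⁻¹ with hT
  have hxb : ∀ i, 0 < x i + b i := fun i => by have := hx i; have := hb i; linarith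
  have hSpos : 0 < S := Finset.sum_pos (fun i _ => inv_pos.2 (hx i)) univ_nonempty
  have hTpos : 0 < T := Finset.sum_pos (fun i _ => inv_pos.2 (hxb i)) univ_nonempty
  -- key: T⁻¹ ≤ S⁻¹ + ∑ b
  have key : T⁻¹ ≤ S⁻¹ + ∑ i, b i := by
    have hdiff : S - T = ∑ i, b i / (x i * (x i + b i)) := by
      rw [hS, hT, ← Finset.sum_sub_distrib]
      refine Finset.sum_congr rfl fun i _ => ?_
      rw [inv_sub_inv (hx i).ne' (hxb i).ne', add_sub_cancel_left]
    have hterm : ∀ i, b i / (x i * (x i + b i)) ≤ b i * (S * T) := by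
      intro i
      have h1 : (x i)⁻¹ ≤ S := Finset.single_le_sum
        (fun j _ => le_of_lt (inv_pos.2 (hx j))) (Finset.mem_univ i)
      have h2 : (x i + b i)⁻¹ ≤ T := Finset.single_le_sum
        (fun j _ => le_of_lt (inv_pos.2 (hxb j))) (Finset.mem_univ i)
      have h3 : (x i * (x i + b i))⁻¹ ≤ S * T := by
        rw [mul_inv]
        exact mul_le_mul h1 h2 (le_of_lt (inv_pos.2 (hxb i))) (le_of_lt hSpos)
      calc b i / (x i * (x i + b i)) = b i * (x i * (x i + b i))⁻¹ := by
            rw [div_eq_mul_inv]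
        _ ≤ b i * (S * T) := mul_le_mul_of_nonneg_left h3 (hb i)
    have hsum : S - T ≤ (∑ i, b i) * (S * T) := by
      rw [hdiff, Finset.sum_mul]
      exact Finset.sum_le_sum fun i _ => hterm i
    have : T⁻¹ - S⁻¹ = (S - T) / (S * T) := by
      rw [inv_sub_inv hTpos.ne' hSpos.ne', mul_comm T S]
    rw [← sub_le_iff_le_add', this]
    rw [div_le_iff₀ (by positivity)]
    linarith
  linarith
end

section
/- Let V be a finite type, let W be a weight function on V whose associated graph G_W is connected, and let a, b ∈ V with a ≠ b. Then there exists a unique potential U : V → ℝ with U a = 1 and U b = 0 minimizing the energy E_W among all potentials with these boundary values; moreover, this minimizer satisfies the harmonicity (current conservation) equations ∑_{y ∈ V} W x y · (U x − U y) = 0 for every vertex x ∉ {a, b}. -/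
open Finset

/-- `W` is a weight function on `V`: symmetric, nonnegative, vanishing on the diagonal. -/
def IsWeight {V : Type*} (W : V → V → ℝ) : Prop :=
  (∀ x y, W x y = W y x) ∧ (∀ x y, 0 ≤ W x y) ∧ (∀ x, W x x = 0)

/-- The energy of a potential `U` in the circuit with conductances `W`. -/
noncomputable def energy {V : Type*} [Fintype V] (W : V → V → ℝ) (U : V → ℝ) : ℝ :=
  (1 / 2) * ∑ x, ∑ y, W x y * (U x - U y) ^ 2

/-- The graph `G_W` (adjacency: `x ≠ y` and `W x y > 0`) is connected. -/
def WConnected {V : Type*} (W : V → V → ℝ) : Prop :=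
  ∀ x y : V, Relation.ReflTransGen (fun u v => u ≠ v ∧ 0 < W u v) x y

section Aux
variable {V : Type*} [Fintype V] (W : V → V → ℝ)

lemma energy_nonneg (hW : IsWeight W) (U : V → ℝ) : 0 ≤ energy W U := by
  unfold energy
  have : (0:ℝ) ≤ ∑ x, ∑ y, W x y * (U x - U y) ^ 2 :=
    Finset.sum_nonneg fun x _ => Finset.sum_nonneg fun y _ =>
      mul_nonneg (hW.2.1 x y) (sq_nonneg _)
  linarith

lemma energy_par (U U' : V → ℝ) :
    energy W U + energy W U' =
      2 * energy W (fun z => (U z + U' z) / 2) + 2 * energy W (fun z => (U z - U' z) / 2) := by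
  have h : ∑ p : V, ∑ q : V, (W p q * (U p - U q) ^ 2 + W p q * (U' p - U' q) ^ 2)
      = ∑ p : V, ∑ q : V,
          (2 * (W p q * ((U p + U' p) / 2 - ((U q + U' q) / 2)) ^ 2)
            + 2 * (W p q * ((U p - U' p) / 2 - ((U q - U' q) / 2)) ^ 2)) :=
    Finset.sum_congr rfl fun p _ => Finset.sum_congr rfl fun q _ => by ring
  simp only [Finset.sum_add_distrib, ← Finset.mul_sum] at h
  simp only [energy]
  linarith

lemma term_le_energy (hW : IsWeight W) (U : V → ℝ) {p q : V} (hpq : p ≠ q) :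
    W p q * (U p - U q) ^ 2 ≤ energy W U := by
  classical
  obtain ⟨hsymm, hnn, -⟩ := hW
  have hterm : ∀ a b : V, 0 ≤ W a b * (U a - U b) ^ 2 := fun a b =>
    mul_nonneg (hnn a b) (sq_nonneg _)
  have hrow : ∀ a : V, 0 ≤ ∑ q' : V, W a q' * (U a - U q') ^ 2 := fun a =>
    Finset.sum_nonneg fun _ _ => hterm _ _
  have h1 : W p q * (U p - U q) ^ 2 ≤ ∑ q' : V, W p q' * (U p - U q') ^ 2 :=
    Finset.single_le_sum (fun i _ => hterm p i) (Finset.mem_univ q)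
  have h2 : W q p * (U q - U p) ^ 2 ≤ ∑ q' : V, W q q' * (U q - U q') ^ 2 :=
    Finset.single_le_sum (fun i _ => hterm q i) (Finset.mem_univ p)
  have h3 : (∑ q' : V, W p q' * (U p - U q') ^ 2) + (∑ q' : V, W q q' * (U q - U q') ^ 2)
      ≤ ∑ a : V, ∑ q' : V, W a q' * (U a - U q') ^ 2 := by
    rw [← Finset.sum_pair (f := fun a : V => ∑ q' : V, W a q' * (U a - U q') ^ 2) hpq]
    exact Finset.sum_le_sum_of_subset_of_nonneg (Finset.subset_univ _) (fun i _ _ => hrow i)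
  have hsym2 : W q p * (U q - U p) ^ 2 = W p q * (U p - U q) ^ 2 := by
    rw [hsymm q p]; ring
  unfold energy
  linarith

lemma energy_update [DecidableEq V] (hW : IsWeight W) (U : V → ℝ) (x : V) (t : ℝ) :
    energy W (fun y => U y + if y = x then t else 0) =
      energy W U + 2 * t * (∑ y, W x y * (U x - U y)) + t ^ 2 * ∑ y, W x y := by
  classical
  obtain ⟨hsymm, hnn, hdiag⟩ := hW
  set e : V → ℝ := fun p => if p = x then 1 else 0 with he
  have expand : ∀ p q : V,
      W p q * ((U p + (if p = x then t else 0)) - (U q + (if q = x then t else 0))) ^ 2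
        = W p q * (U p - U q) ^ 2
          + 2 * t * (W p q * (U p - U q) * e p) - 2 * t * (W p q * (U p - U q) * e q)
          + t ^ 2 * (W p q * e p) + t ^ 2 * (W p q * e q)
          - 2 * t ^ 2 * (W p q * (e p * e q)) := by
    intro p q
    simp only [he]
    split_ifs <;> ring
  have h1 : ∑ p : V, ∑ q : V, W p q * (U p - U q) * e p = ∑ q : V, W x q * (U x - U q) := by
    have step : ∀ p : V, ∑ q : V, W p q * (U p - U q) * e p
        = (if p = x then ∑ q : V, W p q * (U p - U q) else 0) := by
      intro p
      rw [← Finset.sum_mul]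
      simp only [he]
      split_ifs <;> simp
    simp only [step]
    simp
  have h2 : ∑ p : V, ∑ q : V, W p q * (U p - U q) * e q
      = -∑ q : V, W x q * (U x - U q) := by
    rw [Finset.sum_comm]
    have step : ∀ q : V, ∑ p : V, W p q * (U p - U q) * e q
        = (if q = x then ∑ p : V, W p q * (U p - U q) else 0) := by
      intro q
      rw [← Finset.sum_mul]
      simp only [he]
      split_ifs <;> simp
    simp only [step]
    simp only [Finset.sum_ite_eq', Finset.mem_univ, if_true]
    rw [← Finset.sum_neg_distrib]
    exact Finset.sum_congr rfl fun p _ => by rw [hsymm p x]; ring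
  have h3 : ∑ p : V, ∑ q : V, W p q * e p = ∑ q : V, W x q := by
    have step : ∀ p : V, ∑ q : V, W p q * e p = (if p = x then ∑ q : V, W p q else 0) := by
      intro p
      rw [← Finset.sum_mul]
      simp only [he]
      split_ifs <;> simp
    simp only [step]
    simp
  have h4 : ∑ p : V, ∑ q : V, W p q * e q = ∑ q : V, W x q := by
    rw [Finset.sum_comm]
    have step : ∀ q : V, ∑ p : V, W p q * e q = (if q = x then ∑ p : V, W p q else 0) := by
      intro q
      rw [← Finset.sum_mul]
      simp only [he]
      split_ifs <;> simp
    simp only [step]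
    simp only [Finset.sum_ite_eq', Finset.mem_univ, if_true]
    exact Finset.sum_congr rfl fun p _ => hsymm p x
  have h5 : ∑ p : V, ∑ q : V, W p q * (e p * e q) = 0 := by
    have step : ∀ p : V, ∑ q : V, W p q * (e p * e q) = W p x * e p := by
      intro p
      have hq : ∀ q : V, W p q * (e p * e q) = (if q = x then W p q * e p else 0) := by
        intro q
        simp only [he]
        split_ifs <;> ring
      simp only [hq]
      simp
    simp only [step]
    have hp : ∀ p : V, W p x * e p = (if p = x then W p x else 0) := by
      intro p
      simp only [he]
      split_ifs <;> ring
    simp only [hp]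
    simp [hdiag]
  have h : ∑ p : V, ∑ q : V,
      W p q * ((U p + (if p = x then t else 0)) - (U q + (if q = x then t else 0))) ^ 2
      = ∑ p : V, ∑ q : V,
        (W p q * (U p - U q) ^ 2
          + 2 * t * (W p q * (U p - U q) * e p) - 2 * t * (W p q * (U p - U q) * e q)
          + t ^ 2 * (W p q * e p) + t ^ 2 * (W p q * e q)
          - 2 * t ^ 2 * (W p q * (e p * e q))) :=
    Finset.sum_congr rfl fun p _ => Finset.sum_congr rfl fun q _ => expand p q
  simp only [Finset.sum_add_distrib, Finset.sum_sub_distrib, ← Finset.mul_sum] at h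
  rw [h1, h2, h3, h4, h5] at h
  simp only [energy]
  linear_combination (1/2) * h

lemma energy_cont : Continuous (fun U : V → ℝ => energy W U) := by
  unfold energy
  exact continuous_const.mul (continuous_finset_sum _ fun x _ =>
    continuous_finset_sum _ fun y _ =>
      continuous_const.mul (((continuous_apply x).sub (continuous_apply y)).pow 2))

lemma bound_of_energy (hW : IsWeight W) (hconn : WConnected W) (b : V) (C : ℝ) :
    ∀ x : V, ∃ M : ℝ, ∀ U : V → ℝ, U b = 0 → energy W U ≤ C → |U x| ≤ M := by
  intro x
  have h := hconn b x
  induction h with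
  | refl => exact ⟨0, fun U hUb _ => by simp [hUb]⟩
  | @tail u v hpath hstep ih =>
    obtain ⟨M, hM⟩ := ih
    refine ⟨M + Real.sqrt (C / W u v), fun U hUb hUE => ?_⟩
    have h1 : W u v * (U u - U v) ^ 2 ≤ C :=
      le_trans (term_le_energy W hW U hstep.1) hUE
    have h2 : (U u - U v) ^ 2 ≤ C / W u v := by
      rw [le_div_iff₀ hstep.2]; linarith
    have h3 : |U u - U v| ≤ Real.sqrt (C / W u v) := by
      rw [← Real.sqrt_sq_eq_abs]; exact Real.sqrt_le_sqrt h2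
    have habs : |U v| ≤ |U v - U u| + |U u| := by
      simpa using abs_add_le (U v - U u) (U u)
    have hcomm : |U v - U u| = |U u - U v| := abs_sub_comm _ _
    have hMu := hM U hUb hUE
    linarith

lemma exists_min (hW : IsWeight W) (hconn : WConnected W) (a b : V) (hab : a ≠ b) :
    ∃ U : V → ℝ, U a = 1 ∧ U b = 0 ∧
      ∀ U' : V → ℝ, U' a = 1 → U' b = 0 → energy W U ≤ energy W U' := by
  classical
  set U₀ : V → ℝ := fun z => if z = a then 1 else 0 with hU₀
  have hU₀a : U₀ a = 1 := by simp [hU₀]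
  have hU₀b : U₀ b = 0 := by simp [hU₀, hab.symm]
  set C := energy W U₀ with hC
  set S : Set (V → ℝ) := {U | U a = 1 ∧ U b = 0 ∧ energy W U ≤ C} with hS
  have hU₀S : U₀ ∈ S := ⟨hU₀a, hU₀b, le_refl _⟩
  have hclosed : IsClosed S := by
    have h1 : IsClosed {U : V → ℝ | U a = 1} := isClosed_eq (continuous_apply a) continuous_const
    have h2 : IsClosed {U : V → ℝ | U b = 0} := isClosed_eq (continuous_apply b) continuous_const
    have h3 : IsClosed {U : V → ℝ | energy W U ≤ C} := isClosed_le (energy_cont W) continuous_const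
    exact h1.inter (h2.inter h3)
  have hbdd : Bornology.IsBounded S := by
    choose M hM using bound_of_energy W hW hconn b C
    have hRnn : (0:ℝ) ≤ ∑ x : V, |M x| := Finset.sum_nonneg fun i _ => abs_nonneg _
    apply Bornology.IsBounded.subset (Metric.isBounded_closedBall (x := (0 : V → ℝ))
      (r := ∑ x : V, |M x|))
    intro U hU
    rw [Metric.mem_closedBall, dist_zero_right]
    refine (pi_norm_le_iff_of_nonneg hRnn).mpr fun x => ?_
    rw [Real.norm_eq_abs]
    have h1 := hM x U hU.2.1 hU.2.2
    have h2 : M x ≤ ∑ x : V, |M x| :=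
      le_trans (le_abs_self _)
        (Finset.single_le_sum (f := fun i => |M i|) (fun i _ => abs_nonneg _) (Finset.mem_univ x))
    linarith
  have hcompact : IsCompact S := Metric.isCompact_of_isClosed_isBounded hclosed hbdd
  obtain ⟨U, hUS, hUmin⟩ := hcompact.exists_isMinOn ⟨U₀, hU₀S⟩ ((energy_cont W).continuousOn)
  refine ⟨U, hUS.1, hUS.2.1, fun U' ha' hb' => ?_⟩
  by_cases h : energy W U' ≤ C
  · exact isMinOn_iff.mp hUmin U' ⟨ha', hb', h⟩
  · push_neg at h
    have := isMinOn_iff.mp hUmin U₀ hU₀S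
    linarith

end Aux

/-- There is a unique normalized equilibrium (energy-minimizing) potential
distribution, and it satisfies the current conservation (harmonicity) equations at
every internal vertex. -/
theorem exists_unique_equilibrium_potential {V : Type*} [Fintype V]
    (W : V → V → ℝ) (hW : IsWeight W) (hconn : WConnected W)
    (a b : V) (hab : a ≠ b) :
    (∃! U : V → ℝ, U a = 1 ∧ U b = 0 ∧
        ∀ U' : V → ℝ, U' a = 1 → U' b = 0 → energy W U ≤ energy W U') ∧
      ∀ U : V → ℝ,
        (U a = 1 ∧ U b = 0 ∧
          ∀ U' : V → ℝ, U' a = 1 → U' b = 0 → energy W U ≤ energy W U') →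
        ∀ x : V, x ≠ a → x ≠ b → ∑ y, W x y * (U x - U y) = 0 := by
  classical
  constructor
  · obtain ⟨U, hUa, hUb, hUmin⟩ := exists_min W hW hconn a b hab
    refine ⟨U, ⟨hUa, hUb, hUmin⟩, ?_⟩
    rintro U' ⟨ha', hb', hmin'⟩
    have hEeq : energy W U' = energy W U :=
      le_antisymm (hmin' U hUa hUb) (hUmin U' ha' hb')
    have hMa : (fun z => (U' z + U z) / 2) a = 1 := by simp [ha', hUa]
    have hMb : (fun z => (U' z + U z) / 2) b = 0 := by simp [hb', hUb]
    have hle : energy W U' ≤ energy W (fun z => (U' z + U z) / 2) := hmin' _ hMa hMb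
    have hpar := energy_par W U' U
    have hDnn := energy_nonneg W hW (fun z => (U' z - U z) / 2)
    have hD0 : energy W (fun z => (U' z - U z) / 2) = 0 := by linarith
    set D : V → ℝ := fun z => (U' z - U z) / 2 with hD
    have hterm : ∀ p q : V, 0 ≤ W p q * (D p - D q) ^ 2 := fun p q =>
      mul_nonneg (hW.2.1 p q) (sq_nonneg _)
    have hsum : ∑ p : V, ∑ q : V, W p q * (D p - D q) ^ 2 = 0 := by
      unfold energy at hD0; linarith
    have hterms : ∀ p q : V, W p q * (D p - D q) ^ 2 = 0 := by
      intro p q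
      have h := (Finset.sum_eq_zero_iff_of_nonneg
        (fun i _ => Finset.sum_nonneg fun j _ => hterm i j)).mp hsum p (Finset.mem_univ p)
      exact (Finset.sum_eq_zero_iff_of_nonneg (fun j _ => hterm p j)).mp h q (Finset.mem_univ q)
    have hDeq : ∀ p q : V, 0 < W p q → D p = D q := by
      intro p q hpq
      have h2 : (D p - D q) ^ 2 = 0 := by
        rcases mul_eq_zero.mp (hterms p q) with h | h
        · exact absurd h (ne_of_gt hpq)
        · exact h
      have := pow_eq_zero_iff (two_ne_zero) |>.mp h2
      linarith
    have key : ∀ x : V, D x = D a := by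
      intro x
      have h := hconn a x
      induction h with
      | refl => rfl
      | @tail u v hpath hstep ih =>
        rw [← hDeq u v hstep.2]; exact ih
    have hDa : D a = 0 := by simp [hD, ha', hUa]
    funext z
    have hz := key z
    rw [hDa] at hz
    have : (U' z - U z) / 2 = 0 := hz
    linarith
  · rintro U ⟨hUa, hUb, hmin⟩ x hxa hxb
    set L := ∑ y, W x y * (U x - U y) with hL
    set c := ∑ y, W x y with hc
    have hcnn : 0 ≤ c := Finset.sum_nonneg fun y _ => hW.2.1 x y
    have key : ∀ t : ℝ, 0 ≤ 2 * t * L + t ^ 2 * c := by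
      intro t
      have hup := energy_update W hW U x t
      have hmem := hmin (fun y => U y + if y = x then t else 0)
        (by simp [if_neg (fun h : a = x => hxa h.symm), hUa])
        (by simp [if_neg (fun h : b = x => hxb h.symm), hUb])
      rw [hup] at hmem
      linarith
    have hLzero : L ^ 2 ≤ 0 := by
      rcases eq_or_lt_of_le hcnn with hc0 | hc0
      · have h1 := key 1
        have h2 := key (-1)
        nlinarith
      · have ht := key (-(L / c))
        have hne : c ≠ 0 := ne_of_gt hc0
        have h4 : c * (2 * (-(L / c)) * L + (-(L / c)) ^ 2 * c) = -L ^ 2 := by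
          field_simp
          ring
        nlinarith
    have : L ^ 2 = 0 := le_antisymm hLzero (sq_nonneg L)
    exact pow_eq_zero_iff two_ne_zero |>.mp this
end

section
/- Let V be a finite type, let W be a weight function on V, and let a, b ∈ V with a ≠ b. If U : V → ℝ with U a = 1 and U b = 0 minimizes the energy E_W among all potentials with these boundary values, then E_W(U) = ∑_{y ∈ V} W a y · (1 − U y); that is, the equilibrium energy equals the total equilibrium current out of the pole a, and hence equals the total conductance of the circuit. -/
open Finset

/-- At a normalized equilibrium (energy-minimizing) potential, the equilibrium
energy equals the total current flowing out of the pole `a`, i.e. the total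
conductance of the circuit. -/
theorem equilibrium_energy_eq_total_current {V : Type*} [Fintype V]
    (W : V → V → ℝ) (hW : IsWeight W) (a b : V) (hab : a ≠ b)
    (U : V → ℝ) (hUa : U a = 1) (hUb : U b = 0)
    (hmin : ∀ U' : V → ℝ, U' a = 1 → U' b = 0 → energy W U ≤ energy W U') :
    energy W U = ∑ y, W a y * (1 - U y) := by
  classical
  obtain ⟨hsymm, hnn, hdiag⟩ := hW
  -- Kirchhoff's node law at interior nodes
  have kirchhoff : ∀ x, x ≠ a → x ≠ b → ∑ y, W x y * (U x - U y) = 0 := by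
    intro x hxa hxb
    set S : ℝ := ∑ y, W x y * (U x - U y) with hSdef
    set C : ℝ := ∑ y, W x y with hCdef
    have hCnn : (0:ℝ) ≤ C := Finset.sum_nonneg fun y _ => hnn x y
    by_contra hSne
    set t : ℝ := -S / (C + 1) with htdef
    set d : V → ℝ := fun z => if z = x then 1 else 0 with hddef
    set U' : V → ℝ := fun z => U z + t * d z with hU'def
    have hU'a : U' a = 1 := by
      simp [hU'def, hddef, (Ne.symm hxa : a ≠ x), hUa]
    have hU'b : U' b = 0 := by
      simp [hU'def, hddef, (Ne.symm hxb : b ≠ x), hUb]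
    have expand : ∀ z w, W z w * (U' z - U' w) ^ 2 =
        W z w * (U z - U w) ^ 2 + 2 * t * (W z w * (U z - U w) * (d z - d w))
          + t ^ 2 * (W z w * (d z - d w) ^ 2) := by
      intro z w; simp only [hU'def]; ring
    have hA : ∑ z, ∑ w, W z w * (U z - U w) * (d z - d w) = 2 * S := by
      have h1 : ∑ z, ∑ w, W z w * (U z - U w) * d z = S := by
        have : ∀ z, ∑ w, W z w * (U z - U w) * d z
            = (if z = x then ∑ w, W x w * (U x - U w) else 0) := by
          intro z
          by_cases hz : z = x
          · subst hz; simp [hddef]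
          · simp [hddef, hz]
        rw [Finset.sum_congr rfl fun z _ => this z]
        simp [hSdef]
      have h2 : ∑ z, ∑ w, W z w * (U z - U w) * d w = -S := by
        rw [Finset.sum_comm]
        have : ∀ w, ∑ z, W z w * (U z - U w) * d w
            = (if w = x then ∑ z, W z x * (U z - U x) else 0) := by
          intro w
          by_cases hw : w = x
          · subst hw; simp [hddef]
          · simp [hddef, hw]
        rw [Finset.sum_congr rfl fun w _ => this w]
        have : ∑ z, W z x * (U z - U x) = -S := by
          rw [hSdef, ← Finset.sum_neg_distrib]
          exact Finset.sum_congr rfl fun z _ => by rw [hsymm z x]; ring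
        simp [this]
      calc ∑ z, ∑ w, W z w * (U z - U w) * (d z - d w)
          = ∑ z, ∑ w, (W z w * (U z - U w) * d z - W z w * (U z - U w) * d w) := by
            refine Finset.sum_congr rfl fun z _ => Finset.sum_congr rfl fun w _ => by ring
        _ = (∑ z, ∑ w, W z w * (U z - U w) * d z) - ∑ z, ∑ w, W z w * (U z - U w) * d w := by
            simp [Finset.sum_sub_distrib]
        _ = 2 * S := by rw [h1, h2]; ring
    have hB : ∑ z, ∑ w, W z w * (d z - d w) ^ 2 = 2 * C := by
      have hterm : ∀ z w, W z w * (d z - d w) ^ 2 = W z w * d z + W z w * d w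
          - 2 * (W z w * (d z * d w)) := by
        intro z w
        by_cases hz : z = x <;> by_cases hw : w = x <;>
          simp [hddef, hz, hw] <;> ring
      have hcross : ∀ z w, W z w * (d z * d w) = 0 := by
        intro z w
        by_cases hz : z = x
        · by_cases hw : w = x
          · subst hz; subst hw; simp [hdiag]
          · simp [hddef, hw]
        · simp [hddef, hz]
      have h1 : ∑ z, ∑ w, W z w * d z = C := by
        have : ∀ z, ∑ w, W z w * d z = (if z = x then C else 0) := by
          intro z
          by_cases hz : z = x
          · subst hz; simp [hddef, hCdef]
          · simp [hddef, hz]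
        rw [Finset.sum_congr rfl fun z _ => this z]; simp
      have h2 : ∑ z, ∑ w, W z w * d w = C := by
        rw [Finset.sum_comm]
        have : ∀ w, ∑ z, W z w * d w = (if w = x then ∑ z, W z x else 0) := by
          intro w
          by_cases hw : w = x
          · subst hw; simp [hddef]
          · simp [hddef, hw]
        rw [Finset.sum_congr rfl fun w _ => this w]
        have : ∑ z, W z x = C := by
          rw [hCdef]; exact Finset.sum_congr rfl fun z _ => hsymm z x
        simp [this]
      calc ∑ z, ∑ w, W z w * (d z - d w) ^ 2
          = ∑ z, ∑ w, (W z w * d z + W z w * d w - 2 * (W z w * (d z * d w))) := by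
            exact Finset.sum_congr rfl fun z _ => Finset.sum_congr rfl fun w _ => hterm z w
        _ = (∑ z, ∑ w, W z w * d z) + (∑ z, ∑ w, W z w * d w)
              - 2 * ∑ z, ∑ w, W z w * (d z * d w) := by
            simp [Finset.sum_add_distrib, Finset.sum_sub_distrib, Finset.mul_sum]
        _ = 2 * C := by
            rw [h1, h2]
            simp [hcross]
            ring
    have hkey : energy W U' = energy W U + 2 * t * S + t ^ 2 * C := by
      unfold energy
      rw [Finset.sum_congr rfl fun z _ => Finset.sum_congr rfl fun w _ => expand z w]
      rw [show ∀ (f g h : V → V → ℝ), (∑ z, ∑ w, (f z w + g z w + h z w))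
            = (∑ z, ∑ w, f z w) + (∑ z, ∑ w, g z w) + (∑ z, ∑ w, h z w) from
          fun f g h => by simp [Finset.sum_add_distrib]]
      rw [show (∑ z, ∑ w, 2 * t * (W z w * (U z - U w) * (d z - d w)))
            = 2 * t * ∑ z, ∑ w, W z w * (U z - U w) * (d z - d w) from by
          simp [Finset.mul_sum]]
      rw [show (∑ z, ∑ w, t ^ 2 * (W z w * (d z - d w) ^ 2))
            = t ^ 2 * ∑ z, ∑ w, W z w * (d z - d w) ^ 2 from by
          simp [Finset.mul_sum]]
      rw [hA, hB]; ring
    have hle := hmin U' hU'a hU'b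
    rw [hkey] at hle
    have h0 : 0 ≤ 2 * t * S + t ^ 2 * C := by linarith
    have hC1 : (0:ℝ) < C + 1 := by linarith
    have hS2 : (0:ℝ) < S ^ 2 := by positivity
    have heq : 2 * t * S + t ^ 2 * C = -(S ^ 2 * (C + 2)) / (C + 1) ^ 2 := by
      rw [htdef]; field_simp; ring
    have hpos : 0 < S ^ 2 * (C + 2) / (C + 1) ^ 2 := by positivity
    rw [heq] at h0
    rw [neg_div] at h0
    linarith
  -- energy as sum of currents weighted by potential
  have hrepr : energy W U = ∑ x, U x * ∑ y, W x y * (U x - U y) := by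
    have hswap : ∑ x, ∑ y, W x y * (U x - U y) * U y
        = -∑ x, ∑ y, W x y * (U x - U y) * U x := by
      rw [Finset.sum_comm]
      rw [← Finset.sum_neg_distrib]
      refine Finset.sum_congr rfl fun x _ => ?_
      rw [← Finset.sum_neg_distrib]
      refine Finset.sum_congr rfl fun y _ => ?_
      rw [hsymm y x]; ring
    unfold energy
    have hexp : ∀ x y, W x y * (U x - U y) ^ 2
        = W x y * (U x - U y) * U x - W x y * (U x - U y) * U y := by
      intro x y; ring
    rw [Finset.sum_congr rfl fun x _ => Finset.sum_congr rfl fun y _ => hexp x y]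
    rw [show (∑ x, ∑ y, (W x y * (U x - U y) * U x - W x y * (U x - U y) * U y))
          = (∑ x, ∑ y, W x y * (U x - U y) * U x) - ∑ x, ∑ y, W x y * (U x - U y) * U y from by
        simp [Finset.sum_sub_distrib]]
    rw [hswap]
    rw [show ∀ A : ℝ, 1 / 2 * (A - -A) = A from fun A => by ring]
    refine Finset.sum_congr rfl fun x _ => ?_
    rw [Finset.mul_sum]
    exact Finset.sum_congr rfl fun y _ => by ring
  rw [hrepr]
  rw [Finset.sum_eq_single a]
  · simp [hUa]
  · intro x _ hxa
    by_cases hxb : x = b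
    · subst hxb; rw [hUb]; ring
    · rw [kirchhoff x hxa hxb]; ring
  · intro h; exact absurd (Finset.mem_univ a) h
end

section
/- (Quotient Lemma) Let ι be a finite index set and for each i ∈ ι let Vᵢ be a finite type, Wᵢ a weight function on Vᵢ, and aᵢ, bᵢ ∈ Vᵢ with aᵢ ≠ bᵢ. Let V be a finite type with a ≠ b in V, and let φᵢ : Vᵢ → V be maps with φᵢ aᵢ = a and φᵢ bᵢ = b, such that no internal vertex is identified with a battery vertex (φᵢ x ∈ {a, b} implies x ∈ {aᵢ, bᵢ}). Define the quotient weight W on V by W x y = ∑_{i ∈ ι} ∑_{u ∈ φᵢ⁻¹(x)} ∑_{v ∈ φᵢ⁻¹(y)} Wᵢ u v for x ≠ y, and W x x = 0. Then cond(W, a, b) ≥ ∑_{i ∈ ι} cond(Wᵢ, aᵢ, bᵢ). -/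
open Finset

/-- The total conductance of the circuit `(V, W)` with battery `{a, b}`: the
infimum of the energy over all potentials normalized by `U a = 1`, `U b = 0`. -/
noncomputable def totalCond {V : Type*} [Fintype V] (W : V → V → ℝ) (a b : V) : ℝ :=
  sInf (energy W '' {U : V → ℝ | U a = 1 ∧ U b = 0})

private lemma sum_comm3 {α β γ : Type*} [Fintype α] [Fintype β] [Fintype γ]
    (f : α → β → γ → ℝ) :
    ∑ x, ∑ y, ∑ z, f x y z = ∑ z, ∑ x, ∑ y, f x y z := by
  calc ∑ x, ∑ y, ∑ z, f x y z = ∑ x, ∑ z, ∑ y, f x y z :=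
        Finset.sum_congr rfl fun x _ => Finset.sum_comm
    _ = ∑ z, ∑ x, ∑ y, f x y z := Finset.sum_comm

private lemma energy_nonneg_s11 {V : Type*} [Fintype V] {W : V → V → ℝ}
    (h : ∀ x y, 0 ≤ W x y) (U : V → ℝ) : 0 ≤ energy W U := by
  apply mul_nonneg (by norm_num)
  exact Finset.sum_nonneg fun x _ => Finset.sum_nonneg fun y _ =>
    mul_nonneg (h x y) (sq_nonneg _)

/-- Quotient lemma: the conductance of a quotient of a disjoint union of circuits,
with all batteries identified, is at least the sum of the individual conductances. -/
theorem quotient_conductance_ge_sum {ι : Type*} [Fintype ι]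
    (V' : ι → Type*) [∀ i, Fintype (V' i)]
    (W' : ∀ i, V' i → V' i → ℝ) (hW' : ∀ i, IsWeight (W' i))
    (a' b' : ∀ i, V' i) (hab' : ∀ i, a' i ≠ b' i)
    {V : Type*} [Fintype V] [DecidableEq V]
    (a b : V) (hab : a ≠ b)
    (φ : ∀ i, V' i → V) (hφa : ∀ i, φ i (a' i) = a) (hφb : ∀ i, φ i (b' i) = b)
    (hint : ∀ i x, (φ i x = a ∨ φ i x = b) → x = a' i ∨ x = b' i)
    (W : V → V → ℝ)
    (hWdef : ∀ x y, x ≠ y →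
      W x y = ∑ i, ∑ u, ∑ v, if φ i u = x ∧ φ i v = y then W' i u v else 0)
    (hWdiag : ∀ x, W x x = 0) :
    ∑ i, totalCond (W' i) (a' i) (b' i) ≤ totalCond W a b := by
  apply le_csInf
  · exact ⟨_, ⟨fun x => if x = a then 1 else 0, ⟨by simp, by simp [Ne.symm hab]⟩, rfl⟩⟩
  · rintro e ⟨U, ⟨hUa, hUb⟩, rfl⟩
    have key : energy W U = ∑ i, energy (W' i) (fun u => U (φ i u)) := by
      unfold energy
      rw [← Finset.mul_sum]
      congr 1
      calc ∑ x, ∑ y, W x y * (U x - U y) ^ 2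
          = ∑ x, ∑ y, ∑ i, ∑ u, ∑ v,
              if φ i u = x ∧ φ i v = y then W' i u v * (U x - U y) ^ 2 else 0 := by
            refine Finset.sum_congr rfl fun x _ => Finset.sum_congr rfl fun y _ => ?_
            by_cases hxy : x = y
            · subst hxy
              simp [hWdiag]
            · rw [hWdef x y hxy, Finset.sum_mul]
              refine Finset.sum_congr rfl fun i _ => ?_
              rw [Finset.sum_mul]
              refine Finset.sum_congr rfl fun u _ => ?_
              rw [Finset.sum_mul]
              refine Finset.sum_congr rfl fun v _ => ?_
              rw [ite_mul, zero_mul]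
        _ = ∑ i, ∑ x, ∑ y, ∑ u, ∑ v,
              if φ i u = x ∧ φ i v = y then W' i u v * (U x - U y) ^ 2 else 0 :=
            sum_comm3 _
        _ = ∑ i, ∑ u, ∑ x, ∑ y, ∑ v,
              if φ i u = x ∧ φ i v = y then W' i u v * (U x - U y) ^ 2 else 0 :=
            Finset.sum_congr rfl fun i _ => sum_comm3 _
        _ = ∑ i, ∑ u, ∑ v, ∑ x, ∑ y,
              if φ i u = x ∧ φ i v = y then W' i u v * (U x - U y) ^ 2 else 0 :=
            Finset.sum_congr rfl fun i _ => Finset.sum_congr rfl fun u _ => sum_comm3 _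
        _ = ∑ i, ∑ u, ∑ v, W' i u v * (U (φ i u) - U (φ i v)) ^ 2 := by
            refine Finset.sum_congr rfl fun i _ => Finset.sum_congr rfl fun u _ =>
              Finset.sum_congr rfl fun v _ => ?_
            simp [ite_and, Finset.sum_ite_eq]
    rw [key]
    refine Finset.sum_le_sum fun i _ => ?_
    apply csInf_le
    · exact ⟨0, by rintro e ⟨U', _, rfl⟩; exact energy_nonneg_s11 (hW' i).2.1 U'⟩
    · exact ⟨fun u => U (φ i u), ⟨by simp [hφa, hUa], by simp [hφb, hUb]⟩, rfl⟩
end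

section
/- (Maximum principle for the equilibrium potential) Let V be a finite type, let W be a weight function on V whose associated graph G_W is connected, and let a, b ∈ V with a ≠ b. If U : V → ℝ with U a = 1 and U b = 0 minimizes the energy E_W among all potentials with these boundary values, then 0 ≤ U x ≤ 1 for every x ∈ V. -/
open Finset

/-- The clamp of a real number to `[0,1]`. -/
noncomputable def clamp01 (t : ℝ) : ℝ := min 1 (max 0 t)

lemma clamp01_lipschitz (s t : ℝ) : |clamp01 s - clamp01 t| ≤ |s - t| := by
  unfold clamp01
  calc |min 1 (max 0 s) - min 1 (max 0 t)|
      ≤ max |(1:ℝ) - 1| |max 0 s - max 0 t| := abs_min_sub_min_le_max 1 (max 0 s) 1 (max 0 t)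
    _ = |max 0 s - max 0 t| := by simp
    _ = |max s 0 - max t 0| := by rw [max_comm (0:ℝ) s, max_comm (0:ℝ) t]
    _ ≤ |s - t| := abs_max_sub_max_le_abs s t 0

lemma clamp01_nonneg (t : ℝ) : 0 ≤ clamp01 t := le_min (by norm_num) (le_max_left 0 t)

lemma clamp01_le_one (t : ℝ) : clamp01 t ≤ 1 := min_le_left _ _

lemma clamp01_of_mem (t : ℝ) (h0 : 0 ≤ t) (h1 : t ≤ 1) : clamp01 t = t := by
  unfold clamp01
  rw [max_eq_right h0, min_eq_right h1]

lemma clamp01_of_gt_one {t : ℝ} (h : 1 < t) : clamp01 t = 1 := by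
  unfold clamp01
  rw [min_eq_left (le_max_of_le_right h.le)]

lemma clamp01_of_lt_zero {t : ℝ} (h : t < 0) : clamp01 t = 0 := by
  unfold clamp01
  rw [max_eq_left h.le, min_eq_right (by norm_num)]

/-- Strict contraction across the boundary `1`. -/
lemma clamp01_strict_high {s t : ℝ} (hs : 1 < s) (ht : t < s) :
    |clamp01 s - clamp01 t| < |s - t| := by
  rw [clamp01_of_gt_one hs]
  rcases le_or_gt t 1 with h | h
  · have hct : t ≤ clamp01 t := by
      unfold clamp01
      exact le_min h (le_max_right 0 t)
    have h1 : clamp01 t ≤ 1 := clamp01_le_one t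
    rw [abs_of_nonneg (by linarith), abs_of_nonneg (by linarith)]
    linarith
  · rw [clamp01_of_gt_one h]
    simp only [sub_self, abs_zero]
    rw [abs_of_pos (by linarith)]
    linarith

/-- Strict contraction across the boundary `0`. -/
lemma clamp01_strict_low {s t : ℝ} (hs : s < 0) (ht : s < t) :
    |clamp01 s - clamp01 t| < |s - t| := by
  rw [clamp01_of_lt_zero hs]
  rcases le_or_gt 0 t with h | h
  · have hct : clamp01 t ≤ t := by
      unfold clamp01
      rw [max_eq_right h]
      exact min_le_right 1 t
    have h0 : 0 ≤ clamp01 t := clamp01_nonneg t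
    rw [abs_sub_comm, abs_sub_comm s t, abs_of_nonneg (by linarith),
      abs_of_nonneg (by linarith)]
    linarith
  · rw [clamp01_of_lt_zero h]
    simp only [sub_self, abs_zero]
    rw [abs_sub_comm, abs_of_pos (by linarith)]
    linarith

/-- Maximum principle: the equilibrium (energy-minimizing normalized) potential
takes values in `[0, 1]`. -/
theorem equilibrium_maximum_principle {V : Type*} [Fintype V]
    (W : V → V → ℝ) (hW : IsWeight W) (hconn : WConnected W)
    (a b : V) (hab : a ≠ b)
    (U : V → ℝ) (hUa : U a = 1) (hUb : U b = 0)
    (hmin : ∀ U' : V → ℝ, U' a = 1 → U' b = 0 → energy W U ≤ energy W U') :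
    ∀ x : V, 0 ≤ U x ∧ U x ≤ 1 := by
  classical
  obtain ⟨hsymm, hnn, hdiag⟩ := hW
  set U' : V → ℝ := fun x => clamp01 (U x) with hU'
  have hU'a : U' a = 1 := by simp [hU', hUa, clamp01_of_mem]
  have hU'b : U' b = 0 := by simp [hU', hUb, clamp01_of_mem]
  -- termwise comparison
  have hterm : ∀ x y : V, W x y * (U' x - U' y) ^ 2 ≤ W x y * (U x - U y) ^ 2 := by
    intro x y
    apply mul_le_mul_of_nonneg_left _ (hnn x y)
    rw [← sq_abs (U' x - U' y), ← sq_abs (U x - U y)]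
    exact pow_le_pow_left₀ (abs_nonneg _) (clamp01_lipschitz (U x) (U y)) 2
  -- key: on edges, the clamp doesn't change the difference (else strictly lower energy)
  have hedge : ∀ u v : V, 0 < W u v → |U' u - U' v| = |U u - U v| := by
    intro u v huv
    by_contra hne
    have hlt : |U' u - U' v| < |U u - U v| :=
      lt_of_le_of_ne (clamp01_lipschitz (U u) (U v)) hne
    have hterm' : W u v * (U' u - U' v) ^ 2 < W u v * (U u - U v) ^ 2 := by
      apply mul_lt_mul_of_pos_left _ huv
      rw [← sq_abs (U' u - U' v), ← sq_abs (U u - U v)]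
      exact pow_lt_pow_left₀ hlt (abs_nonneg _) (by norm_num)
    have hsum : ∑ x, ∑ y, W x y * (U' x - U' y) ^ 2 < ∑ x, ∑ y, W x y * (U x - U y) ^ 2 := by
      apply Finset.sum_lt_sum (fun x _ => Finset.sum_le_sum (fun y _ => hterm x y))
      exact ⟨u, Finset.mem_univ u,
        Finset.sum_lt_sum (fun y _ => hterm u y) ⟨v, Finset.mem_univ v, hterm'⟩⟩
    have : energy W U' < energy W U := by
      unfold energy
      linarith
    exact absurd (hmin U' hU'a hU'b) (not_le.mpr this)
  -- maximum is ≤ 1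
  obtain ⟨xM, _, hxM⟩ := Finset.exists_max_image Finset.univ U ⟨a, Finset.mem_univ a⟩
  have hxM' : ∀ y : V, U y ≤ U xM := fun y => hxM y (Finset.mem_univ y)
  have hMle : U xM ≤ 1 := by
    by_contra hM
    push_neg at hM
    have hreach : ∀ y : V, Relation.ReflTransGen (fun u v => u ≠ v ∧ 0 < W u v) xM y →
        U y = U xM := by
      intro y hy
      induction hy with
      | refl => rfl
      | tail _ h ih =>
        rename_i p q hpq
        obtain ⟨hne, hpos⟩ := h
        by_contra hq
        have hq' : U q < U xM := lt_of_le_of_ne (hxM' q) hq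
        have hstrict : |clamp01 (U p) - clamp01 (U q)| < |U p - U q| := by
          rw [ih]
          exact clamp01_strict_high hM hq'
        have := hedge p q hpos
        simp only [hU'] at this
        rw [ih] at hstrict
        exact absurd this (ne_of_lt (by rw [ih]; exact hstrict))
    have := hreach a (hconn xM a)
    rw [hUa] at this
    linarith
  -- minimum is ≥ 0
  obtain ⟨xm, _, hxm⟩ := Finset.exists_min_image Finset.univ U ⟨a, Finset.mem_univ a⟩
  have hxm' : ∀ y : V, U xm ≤ U y := fun y => hxm y (Finset.mem_univ y)
  have hmge : 0 ≤ U xm := by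
    by_contra hm
    push_neg at hm
    have hreach : ∀ y : V, Relation.ReflTransGen (fun u v => u ≠ v ∧ 0 < W u v) xm y →
        U y = U xm := by
      intro y hy
      induction hy with
      | refl => rfl
      | tail _ h ih =>
        rename_i p q hpq
        obtain ⟨hne, hpos⟩ := h
        by_contra hq
        have hq' : U xm < U q := lt_of_le_of_ne (hxm' q) (Ne.symm hq)
        have hstrict : |clamp01 (U p) - clamp01 (U q)| < |U p - U q| := by
          rw [ih]
          exact clamp01_strict_low hm hq'
        have := hedge p q hpos
        simp only [hU'] at this
        exact absurd this (ne_of_lt hstrict)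
    have := hreach b (hconn xm b)
    rw [hUb] at this
    linarith
  intro x
  exact ⟨le_trans hmge (hxm' x), le_trans (hxM' x) hMle⟩
end

section
/- For every r > 0 there exists a constant C > 0 (depending only on r) with the following property: whenever 0 < a ≤ r, 0 < b ≤ r, 0 < c ≤ r, and c' ≥ 0 is a real number satisfying cosh c' = (cosh c + cosh a · cosh b) / (sinh a · sinh b), then | c' + log a + log b | ≤ C. In other words, c' = −log a − log b + O(1; r). -/
open Real

lemma sinh_le_self_mul_cosh {x : ℝ} (hx : 0 ≤ x) : Real.sinh x ≤ x * Real.cosh x := by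
  have hmono : MonotoneOn (fun y : ℝ => y * Real.cosh y - Real.sinh y) (Set.Ici 0) := by
    apply monotoneOn_of_deriv_nonneg (convex_Ici 0)
    · exact (Continuous.sub (continuous_id.mul Real.continuous_cosh)
        Real.continuous_sinh).continuousOn
    · intro y hy
      exact (((hasDerivAt_id y).mul (Real.hasDerivAt_cosh y)).sub
        (Real.hasDerivAt_sinh y)).differentiableAt.differentiableWithinAt
    · intro y hy
      rw [interior_Ici, Set.mem_Ioi] at hy
      have hd : deriv (fun y : ℝ => y * Real.cosh y - Real.sinh y) y
          = y * Real.sinh y := by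
        simp [mul_comm]
      rw [hd]
      exact mul_nonneg hy.le (Real.sinh_nonneg_iff.2 hy.le)
  have h0 : (fun y : ℝ => y * Real.cosh y - Real.sinh y) 0
      ≤ (fun y : ℝ => y * Real.cosh y - Real.sinh y) x :=
    hmono (Set.self_mem_Ici) hx hx
  simp at h0
  linarith

/-- The right-angled hexagon formula: if `cosh c' = (cosh c + cosh a · cosh b) /
(sinh a · sinh b)` with `a, b, c ∈ (0, r]` and `c' ≥ 0`, then
`c' = -log a - log b + O(1; r)`. -/
theorem hexagon_side_length_asymptotics :
    ∀ r : ℝ, 0 < r → ∃ C : ℝ, 0 < C ∧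
      ∀ a b c c' : ℝ, 0 < a → a ≤ r → 0 < b → b ≤ r → 0 < c → c ≤ r → 0 ≤ c' →
        Real.cosh c' = (Real.cosh c + Real.cosh a * Real.cosh b) /
          (Real.sinh a * Real.sinh b) →
        |c' + Real.log a + Real.log b| ≤ C := by
  intro r hr
  set K : ℝ := Real.cosh r + Real.cosh r * Real.cosh r with hK
  have hcosh1 : (1 : ℝ) ≤ Real.cosh r := Real.one_le_cosh r
  have hK2 : (2 : ℝ) ≤ K := by nlinarith
  refine ⟨Real.log (2 * K) + 2 * Real.log (Real.cosh r) + 1, ?_, ?_⟩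
  · have h1 : 0 < Real.log (2 * K) := Real.log_pos (by linarith)
    have h2 : 0 ≤ Real.log (Real.cosh r) := Real.log_nonneg hcosh1
    linarith
  intro a b c c' ha har hb hbr hc hcr hc' heq
  have hsa : 0 < Real.sinh a := Real.sinh_pos_iff.2 ha
  have hsb : 0 < Real.sinh b := Real.sinh_pos_iff.2 hb
  have hcoshr : 0 < Real.cosh r := lt_of_lt_of_le one_pos hcosh1
  -- bounds on sinh
  have hsa1 : a ≤ Real.sinh a := Real.self_le_sinh_iff.2 ha.le
  have hsb1 : b ≤ Real.sinh b := Real.self_le_sinh_iff.2 hb.le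
  have hsa2 : Real.sinh a ≤ a * Real.cosh r := by
    calc Real.sinh a ≤ a * Real.cosh a := sinh_le_self_mul_cosh ha.le
    _ ≤ a * Real.cosh r := by
        apply mul_le_mul_of_nonneg_left _ ha.le
        exact Real.cosh_le_cosh.2 (by rw [abs_of_pos ha, abs_of_pos hr]; exact har)
  have hsb2 : Real.sinh b ≤ b * Real.cosh r := by
    calc Real.sinh b ≤ b * Real.cosh b := sinh_le_self_mul_cosh hb.le
    _ ≤ b * Real.cosh r := by
        apply mul_le_mul_of_nonneg_left _ hb.le
        exact Real.cosh_le_cosh.2 (by rw [abs_of_pos hb, abs_of_pos hr]; exact hbr)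
  -- bounds on numerator
  have hnum_lo : (2 : ℝ) ≤ Real.cosh c + Real.cosh a * Real.cosh b := by
    have h1 := Real.one_le_cosh c
    have h2 := Real.one_le_cosh a
    have h3 := Real.one_le_cosh b
    nlinarith
  have hnum_hi : Real.cosh c + Real.cosh a * Real.cosh b ≤ K := by
    have h1 : Real.cosh c ≤ Real.cosh r :=
      Real.cosh_le_cosh.2 (by rw [abs_of_pos hc, abs_of_pos hr]; exact hcr)
    have h2 : Real.cosh a ≤ Real.cosh r :=
      Real.cosh_le_cosh.2 (by rw [abs_of_pos ha, abs_of_pos hr]; exact har)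
    have h3 : Real.cosh b ≤ Real.cosh r :=
      Real.cosh_le_cosh.2 (by rw [abs_of_pos hb, abs_of_pos hr]; exact hbr)
    have h4 := Real.one_le_cosh a
    nlinarith
  -- relate exp c' and cosh c'
  have hexp1 : Real.exp c' ≤ 2 * Real.cosh c' := by
    have := Real.cosh_add_sinh c'
    have h := Real.cosh_sub_sinh c'
    have := Real.exp_pos (-c')
    linarith
  have hexp2 : Real.cosh c' ≤ Real.exp c' := by
    have := Real.cosh_add_sinh c'
    have h : 0 ≤ Real.sinh c' := Real.sinh_nonneg_iff.2 hc'
    linarith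
  -- upper bound: exp c' ≤ 2K/(a*b)
  have hup : Real.exp c' ≤ 2 * K / (a * b) := by
    have h1 : Real.cosh c' ≤ K / (Real.sinh a * Real.sinh b) := by
      rw [heq]
      gcongr
    have h2 : K / (Real.sinh a * Real.sinh b) ≤ K / (a * b) := by
      apply div_le_div_of_nonneg_left (by linarith) (mul_pos ha hb)
      exact mul_le_mul hsa1 hsb1 hb.le hsa.le
    calc Real.exp c' ≤ 2 * Real.cosh c' := hexp1
    _ ≤ 2 * (K / (a * b)) := by linarith
    _ = 2 * K / (a * b) := by ring
  -- lower bound: 2/(a*b*cosh r^2) ≤ exp c'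
  have hlo : 2 / (a * b * (Real.cosh r * Real.cosh r)) ≤ Real.exp c' := by
    have h1 : 2 / (Real.sinh a * Real.sinh b) ≤ Real.cosh c' := by
      rw [heq]
      gcongr
    have h2 : 2 / (a * b * (Real.cosh r * Real.cosh r))
        ≤ 2 / (Real.sinh a * Real.sinh b) := by
      apply div_le_div_of_nonneg_left (by norm_num) (mul_pos hsa hsb)
      calc Real.sinh a * Real.sinh b ≤ (a * Real.cosh r) * (b * Real.cosh r) :=
            mul_le_mul hsa2 hsb2 hsb.le (by positivity)
      _ = a * b * (Real.cosh r * Real.cosh r) := by ring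
    linarith
  -- take logs
  have hab : 0 < a * b := mul_pos ha hb
  have hcup : c' ≤ Real.log (2 * K) - Real.log a - Real.log b := by
    have := Real.log_le_log (Real.exp_pos c') hup
    rw [Real.log_exp, Real.log_div (by positivity) (by positivity),
      Real.log_mul (ne_of_gt ha) (ne_of_gt hb)] at this
    linarith
  have hclo : Real.log 2 - Real.log a - Real.log b - 2 * Real.log (Real.cosh r) ≤ c' := by
    have h := Real.log_le_log (by positivity) hlo
    rw [Real.log_exp, Real.log_div (by norm_num) (by positivity),
      Real.log_mul (by positivity) (by positivity),
      Real.log_mul (ne_of_gt ha) (ne_of_gt hb),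
      Real.log_mul (ne_of_gt hcoshr) (ne_of_gt hcoshr)] at h
    linarith
  rw [abs_le]
  constructor
  · have h2 : (0 : ℝ) < Real.log 2 := Real.log_pos (by norm_num)
    have h3 : 0 < Real.log (2 * K) := Real.log_pos (by linarith)
    linarith
  · have h2 : 0 ≤ Real.log (Real.cosh r) := Real.log_nonneg hcosh1
    linarith
end
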